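/- Define H(r, t, i) = C(r-1+i, r-1) + ∑_{j=1}^{m} (-1)^j C(r-1+i-tj, r-1) C(r+1, j) where m = min(⌊i/t⌋, r) and C(a,b) = 0 if a < b or a < 0. For k ≥ 2 and t ≥ k+1, setting c = k(t-1) - 1 and r = 2k, the inequality H(2k, t, c) ≥ H(2k, t, c+1) holds for all sufficiently large t. -/

import Mathlib

/-!
For `t ≥ k + 1` both degrees `c` and `c + 1` have `⌊·/t⌋ = k - 1`, so Pascal's rule gives
`H(2k,t,c) - H(2k,t,c+1) = -∑_{j<k} (-1)^j C(2k+1,j) C((k-j)t + k-2, 2k-2)`, a polynomial in `t`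
of degree `2k-2` whose leading coefficient is `-S/(2k-2)!` with
`S = ∑_{j<k} (-1)^j C(2k+1,j) (k-j)^(2k-2)`. Two more applications of Pascal's rule and the
explicit formula `A(n,m) = ∑_{j≤m} (-1)^j C(n+1,j) (m+1-j)^n` for Eulerian numbers turn `S` into
the second difference `A(n,k-1) - 2A(n,k-2) + A(n,k-3)`, `n = 2k-2`. The row `A(n,·)` is symmetric
about `k - 3/2` and strictly increasing below it, so `S = A(n,k-3) - A(n,k-2) < 0`.
-/

/-- The Hilbert function in degree `i` of `K[x_1,…,x_r]/⟨l_1^t,…,l_{r+1}^t⟩` for generic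
linear forms (Lemma C of Stanley/Iarrobino), when the displayed quantity is positive:
`H(r,t,i) = C(r-1+i, r-1) + ∑_{j=1}^{min(⌊i/t⌋, r)} (-1)^j C(r-1+i-tj, r-1) C(r+1, j)`,
with the convention `C(a,b) = 0` for `a < b` or `a < 0`. -/
def hilb (r t i : ℕ) : ℤ :=
  ((r - 1 + i).choose (r - 1) : ℤ) +
    ∑ j ∈ Finset.Icc 1 (min (i / t) r),
      (-1 : ℤ) ^ j * ((r - 1 + i - t * j).choose (r - 1)) * ((r + 1).choose j)

open Finset Polynomial Filter

-- The Eulerian numbers, with `m : ℤ` so that the symmetry `m ↦ n - 1 - m` is total.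
def eulerian : ℕ → ℤ → ℤ
  | 0, m => if m = 0 then 1 else 0
  | n + 1, m => (m + 1) * eulerian n m + (n + 1 - m) * eulerian n (m - 1)

theorem eulerian_succ (n : ℕ) (m : ℤ) :
    eulerian (n + 1) m = (m + 1) * eulerian n m + (n + 1 - m) * eulerian n (m - 1) := rfl

theorem eulerian_of_neg {m : ℤ} (hm : m < 0) : ∀ n, eulerian n m = 0
  | 0 => if_neg hm.ne
  | n + 1 => by rw [eulerian_succ, eulerian_of_neg hm n, eulerian_of_neg (by omega) n]; ring

theorem eulerian_zero_right : ∀ n, eulerian n 0 = 1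
  | 0 => rfl
  | n + 1 => by rw [eulerian_succ, eulerian_zero_right n, eulerian_of_neg (by norm_num) n]; ring

theorem eulerian_symm (n : ℕ) (m : ℤ) : eulerian (n + 1) m = eulerian (n + 1) (n - m) := by
  induction n generalizing m with
  | zero =>
    simp only [eulerian]
    split_ifs <;> omega
  | succ n ih =>
    have h : (n : ℤ) - (m - 1) = (n + 1 : ℕ) - m := by push_cast; ring
    rw [eulerian_succ (n + 1) m, eulerian_succ (n + 1), ih m, ih (m - 1), h, sub_sub]
    push_cast
    ring_nf

theorem eulerian_le_succ (n : ℕ) (m : ℤ) (hm : -1 ≤ m) (hmn : 2 * m + 2 ≤ n) :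
    eulerian n m ≤ eulerian n (m + 1) := by
  induction n generalizing m with
  | zero =>
    obtain rfl : m = -1 := by omega
    simp [eulerian]
  | succ n ih =>
    obtain rfl | hm := hm.eq_or_lt
    · simp [eulerian_of_neg, eulerian_zero_right]
    obtain hn | hn := (show (n : ℤ) = 2 * m + 1 ∨ 2 * m + 2 ≤ n by omega)
    · rw [eulerian_symm n m, hn, show 2 * m + 1 - m = m + 1 by ring]
    have h₁ := ih m (by omega) hn
    have h₂ := ih (m - 1) (by omega) (by omega)
    rw [sub_add_cancel] at h₂
    rw [eulerian_succ, eulerian_succ, add_sub_cancel_right]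
    linarith [mul_nonneg (show 0 ≤ m + 1 by omega) (sub_nonneg.2 h₁),
      mul_nonneg (show (0 : ℤ) ≤ n - m by omega) (sub_nonneg.2 h₂)]

theorem eulerian_lt_succ (n : ℕ) (m : ℤ) (hm : -1 ≤ m) (hmn : 2 * m + 4 ≤ n) :
    eulerian n m < eulerian n (m + 1) := by
  induction n generalizing m with
  | zero => omega
  | succ n ih =>
    obtain rfl | hm := hm.eq_or_lt
    · simp [eulerian_of_neg, eulerian_zero_right]
    have h₁ := eulerian_le_succ n m (by omega) (by omega)
    have h₂ := ih (m - 1) (by omega) (by omega)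
    rw [sub_add_cancel] at h₂
    rw [eulerian_succ, eulerian_succ, add_sub_cancel_right]
    linarith [mul_nonneg (show 0 ≤ m + 1 by omega) (sub_nonneg.2 h₁),
      mul_nonneg (show (0 : ℤ) ≤ n - m by omega) (sub_nonneg.2 h₂.le)]

def altPowSum (N n m : ℕ) : ℤ :=
  ∑ j ∈ range m, (-1) ^ j * (N.choose j : ℤ) * ((m : ℤ) - j) ^ n

theorem altPowSum_succ_left (N n m : ℕ) :
    altPowSum (N + 1) n (m + 1) = altPowSum N n (m + 1) - altPowSum N n m := by
  have pascal : ∀ i ∈ range m,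
      (-1) ^ (i + 1) * ((N + 1).choose (i + 1) : ℤ) * ((m + 1 : ℕ) - (i + 1 : ℕ) : ℤ) ^ n
      = (-1) ^ (i + 1) * (N.choose (i + 1) : ℤ) * ((m + 1 : ℕ) - (i + 1 : ℕ) : ℤ) ^ n
        - (-1) ^ i * (N.choose i : ℤ) * ((m : ℤ) - i) ^ n := by
    intro i _
    rw [Nat.choose_succ_succ']
    push_cast
    ring
  simp only [altPowSum]
  rw [sum_range_succ', sum_range_succ' _ m, sum_congr rfl pascal, sum_sub_distrib]
  simp only [Nat.choose_zero_right]
  push_cast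
  ring

theorem Nat.cast_choose_succ_right_eq (n i : ℕ) :
    ((i + 1) * n.choose (i + 1) : ℤ) = (n - i) * n.choose i := by
  rcases le_or_gt i n with h | h
  · have := Nat.choose_succ_right_eq n i
    zify [h] at this
    linarith
  · rw [Nat.choose_eq_zero_of_lt h, Nat.choose_eq_zero_of_lt (by omega)]
    simp

theorem altPowSum_succ (n m : ℕ) :
    altPowSum (n + 2) (n + 1) (m + 1)
      = (m + 1) * altPowSum (n + 1) n (m + 1) + (n + 1 - m) * altPowSum (n + 1) n m := by
  have term : ∀ i ∈ range m,
      (-1) ^ (i + 1) * ((n + 2).choose (i + 1) : ℤ) * ((m + 1 : ℕ) - (i + 1 : ℕ) : ℤ) ^ (n + 1)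
      = (m + 1) * ((-1) ^ (i + 1) * ((n + 1).choose (i + 1) : ℤ)
          * ((m + 1 : ℕ) - (i + 1 : ℕ) : ℤ) ^ n)
        + (n + 1 - m) * ((-1) ^ i * ((n + 1).choose i : ℤ) * ((m : ℤ) - i) ^ n) := by
    intro i _
    have := Nat.cast_choose_succ_right_eq (n + 1) i
    rw [Nat.choose_succ_succ']
    push_cast at this ⊢
    linear_combination (-1) ^ i * ((m : ℤ) - i) ^ n * this
  simp only [altPowSum]
  rw [sum_range_succ', sum_range_succ' _ m, sum_congr rfl term, sum_add_distrib, mul_add,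
    ← mul_sum, ← mul_sum]
  simp only [Nat.choose_zero_right]
  push_cast
  ring

theorem eulerian_sub_one_eq_altPowSum (n m : ℕ) : eulerian n (m - 1) = altPowSum (n + 1) n m := by
  induction n generalizing m with
  | zero =>
    rcases m with _ | _ | m
    · rfl
    · simp [eulerian, altPowSum]
    · have h : ∀ j, Nat.choose 1 (j + 2) = 0 := fun j => Nat.choose_eq_zero_of_lt (by omega)
      simp [eulerian, altPowSum, sum_range_succ', h, Nat.cast_add_one_ne_zero]
  | succ n ih =>
    rcases m with _ | m
    · exact eulerian_of_neg (by norm_num) _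
    · rw [altPowSum_succ, ← ih, ← ih, eulerian_succ]
      push_cast
      ring_nf

theorem altPowSum_neg {k : ℕ} (hk : 2 ≤ k) : altPowSum (2 * k + 1) (2 * k - 2) k < 0 := by
  obtain ⟨l, rfl⟩ : ∃ l, k = l + 2 := ⟨k - 2, by omega⟩
  have hn : 2 * (l + 2) - 2 = 2 * l + 2 := by omega
  rw [hn, show 2 * (l + 2) + 1 = 2 * l + 2 + 1 + 1 + 1 by ring,
    altPowSum_succ_left (2 * l + 2 + 2), altPowSum_succ_left (2 * l + 2 + 1),
    altPowSum_succ_left (2 * l + 2 + 1) (2 * l + 2) l,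
    ← eulerian_sub_one_eq_altPowSum, ← eulerian_sub_one_eq_altPowSum,
    ← eulerian_sub_one_eq_altPowSum]
  have hsymm : eulerian (2 * l + 2) l = eulerian (2 * l + 2) (l + 1) := by
    rw [eulerian_symm (2 * l + 1)]
    push_cast
    ring_nf
  have hlt := eulerian_lt_succ (2 * l + 2) (l - 1) (by omega) (by push_cast; omega)
  push_cast at hlt ⊢
  ring_nf at hlt hsymm ⊢
  linarith

theorem Polynomial.eventually_pos_of_leadingCoeff_pos {𝕜 : Type*} [NormedField 𝕜] [LinearOrder 𝕜]
    [IsStrictOrderedRing 𝕜] [OrderTopology 𝕜] {P : 𝕜[X]} (hP : 0 < P.leadingCoeff) :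
    ∀ᶠ x in atTop, 0 < P.eval x := by
  rcases P.natDegree.eq_zero_or_pos with h | h
  · rw [eq_C_of_natDegree_eq_zero h]
    rw [leadingCoeff, h] at hP
    simp [hP]
  · exact (P.tendsto_atTop_of_leadingCoeff_nonneg (natDegree_pos_iff_degree_pos.1 h)
      hP.le).eventually_gt_atTop 0

theorem natDegree_descPochhammer_comp_linear_le {R : Type*} [CommRing R] [IsDomain R]
    (d : ℕ) (a b : R) :
    ((descPochhammer R d).comp (C a * X + C b)).natDegree ≤ d := by
  refine natDegree_comp_le.trans ?_
  rw [descPochhammer_natDegree]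
  nlinarith [natDegree_linear_le (a := a) (b := b)]

theorem coeff_descPochhammer_comp_linear {R : Type*} [CommRing R] [IsDomain R] {a : R}
    (ha : a ≠ 0) (d : ℕ) (b : R) :
    ((descPochhammer R d).comp (C a * X + C b)).coeff d = a ^ d := by
  have h := coeff_comp_degree_mul_degree (p := descPochhammer R d) (q := C a * X + C b)
    (by rw [natDegree_linear ha]; exact one_ne_zero)
  rwa [descPochhammer_natDegree, natDegree_linear ha, mul_one,
    (monic_descPochhammer R d).leadingCoeff, one_mul, leadingCoeff_linear ha] at h

theorem eventually_pos_sum_mul_choose {ι : Type*} (s : Finset ι) (c : ι → ℤ) {a : ι → ℕ}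
    (ha : ∀ i ∈ s, a i ≠ 0) (b : ι → ℕ) (d : ℕ) (hlead : 0 < ∑ i ∈ s, c i * a i ^ d) :
    ∀ᶠ t : ℕ in atTop, 0 < ∑ i ∈ s, c i * ((a i * t + b i).choose d : ℤ) := by
  set P : ℝ[X] :=
    ∑ i ∈ s, C (c i : ℝ) * (descPochhammer ℝ d).comp (C (a i : ℝ) * X + C (b i : ℝ))
  have hdeg : P.natDegree ≤ d := natDegree_sum_le_of_forall_le _ _ fun i _ =>
    (natDegree_C_mul_le _ _).trans (natDegree_descPochhammer_comp_linear_le _ _ _)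
  have hcoeff : P.coeff d = ∑ i ∈ s, (c i : ℝ) * (a i : ℝ) ^ d := by
    simp only [P, finsetSum_coeff, coeff_C_mul]
    refine sum_congr rfl fun i hi => ?_
    rw [coeff_descPochhammer_comp_linear (Nat.cast_ne_zero.2 (ha i hi))]
  have heval (t : ℕ) :
      P.eval (t : ℝ) = d.factorial * ∑ i ∈ s, (c i : ℝ) * ((a i * t + b i).choose d : ℝ) := by
    simp only [P, eval_finsetSum, eval_mul, eval_C, eval_comp, eval_add, eval_X, mul_sum]
    refine sum_congr rfl fun i _ => ?_
    rw [show (a i : ℝ) * t + b i = ((a i * t + b i : ℕ) : ℝ) by push_cast; ring,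
      descPochhammer_eval_eq_descFactorial, Nat.descFactorial_eq_factorial_mul_choose]
    push_cast
    ring
  have hcoeff_pos : 0 < P.coeff d := by rw [hcoeff]; exact_mod_cast hlead
  have hlc_pos : 0 < P.leadingCoeff := by
    rwa [leadingCoeff, le_antisymm hdeg (le_natDegree_of_ne_zero hcoeff_pos.ne')]
  filter_upwards [tendsto_natCast_atTop_atTop.eventually
    (eventually_pos_of_leadingCoeff_pos hlc_pos)] with t ht
  rw [heval] at ht
  exact_mod_cast pos_of_mul_pos_right ht (by positivity)

theorem hilb_eq_sum_range (r t i : ℕ) :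
    hilb r t i = ∑ j ∈ range (min (i / t) r + 1),
      (-1 : ℤ) ^ j * ((r - 1 + i - t * j).choose (r - 1)) * ((r + 1).choose j) := by
  rw [hilb, sum_range_succ', add_comm, ← Finset.Ico_add_one_right_eq_Icc, sum_Ico_eq_sum_range]
  simp [add_comm]

theorem hilb_sub_hilb_succ {r t i : ℕ} (hr : 2 ≤ r) (hq : (i + 1) / t = i / t)
    (hqr : i / t ≤ r) :
    hilb r t i - hilb r t (i + 1) = -∑ j ∈ range (i / t + 1),
      (-1 : ℤ) ^ j * ((r - 1 + i - t * j).choose (r - 2)) * ((r + 1).choose j) := by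
  rw [hilb_eq_sum_range, hilb_eq_sum_range, hq, min_eq_left hqr, ← sum_sub_distrib,
    ← sum_neg_distrib]
  refine sum_congr rfl fun j hj => ?_
  have htj : t * j ≤ i := (Nat.mul_le_mul_left t (Nat.lt_succ_iff.1 (mem_range.1 hj))).trans
    (Nat.mul_div_le i t)
  rw [show r - 1 + (i + 1) - t * j = r - 1 + i - t * j + 1 by omega,
    show r - 1 = r - 2 + 1 by omega, Nat.choose_succ_succ']
  push_cast
  ring

theorem hilb_two_mul_sub_hilb_succ {k t : ℕ} (hk : 2 ≤ k) (ht : k + 1 ≤ t) :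
    hilb (2 * k) t (k * (t - 1) - 1) - hilb (2 * k) t (k * (t - 1) - 1 + 1)
      = ∑ j ∈ range k, -(-1) ^ j * ((2 * k + 1).choose j : ℤ)
          * (((k - j) * t + (k - 2)).choose (2 * k - 2) : ℤ) := by
  have hi : k * (t - 1) - 1 = (k - 1) * t + (t - k - 1) := by
    obtain ⟨k, rfl⟩ : ∃ k', k = k' + 1 := ⟨k - 1, by omega⟩
    obtain ⟨t, rfl⟩ : ∃ t', t = t' + 1 := ⟨t - 1, by omega⟩
    simp only [Nat.add_sub_cancel, add_one_mul, mul_add_one]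
    omega
  have hdiv : (k * (t - 1) - 1) / t = k - 1 := by
    rw [hi, mul_comm, Nat.mul_add_div (by omega), Nat.div_eq_of_lt (by omega), add_zero]
  have hdiv' : (k * (t - 1) - 1 + 1) / t = k - 1 := by
    rw [hi, add_assoc, mul_comm, Nat.mul_add_div (by omega), Nat.div_eq_of_lt (by omega), add_zero]
  rw [hilb_sub_hilb_succ (by omega) (hdiv'.trans hdiv.symm) (by omega), hdiv,
    Nat.sub_add_cancel (by omega : 1 ≤ k), ← sum_neg_distrib]
  refine sum_congr rfl fun j hj => ?_
  have hjk := mem_range.1 hj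
  have h₁ : (k - 1) * t = t * j + (k - 1 - j) * t := by
    rw [mul_comm t, ← add_mul, Nat.add_sub_cancel' (by omega)]
  have h₂ : (k - j) * t = (k - 1 - j) * t + t := by
    rw [← add_one_mul, show k - 1 - j + 1 = k - j by omega]
  rw [show 2 * k - 1 + (k * (t - 1) - 1) - t * j = (k - j) * t + (k - 2) by omega]
  ring

/-- For `k ≥ 2`, `r = 2k`, `c = k(t-1) - 1`, the inequality `H(2k,t,c) ≥ H(2k,t,c+1)`
holds for all sufficiently large `t` (with `t ≥ k+1`). -/
theorem stmt_12 (k : ℕ) (hk : 2 ≤ k) :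
    ∃ N : ℕ, ∀ t : ℕ, N ≤ t → k + 1 ≤ t →
      hilb (2 * k) t (k * (t - 1) - 1) ≥ hilb (2 * k) t (k * (t - 1) - 1 + 1) := by
  have hlead : 0 < ∑ j ∈ range k,
      -(-1) ^ j * ((2 * k + 1).choose j : ℤ) * ((k - j : ℕ) : ℤ) ^ (2 * k - 2) := by
    convert neg_pos.2 (altPowSum_neg hk) using 1
    rw [altPowSum, ← sum_neg_distrib]
    refine sum_congr rfl fun j hj => ?_
    rw [Nat.cast_sub (mem_range.1 hj).le]
    ring
  obtain ⟨N, hN⟩ := eventually_atTop.1 <| eventually_pos_sum_mul_choose (range k) _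
    (fun j hj => Nat.sub_ne_zero_of_lt (mem_range.1 hj)) (fun _ => k - 2) _ hlead
  refine ⟨N, fun t hNt hkt => ?_⟩
  rw [ge_iff_le, ← sub_nonneg, hilb_two_mul_sub_hilb_succ hk hkt]
  exact (hN t hNt).le
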